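/- Let N be an n-bit binary counter, let R be a valid configuration of N, and let u ∈ L_inc = ι_sync (ι_dec ι_rotr ι_off)* ι_inc (ι_off ι_rotr)* ι_sync be such that |R·u| = |R|. If v is the value of the counter under R and v′ is the value under R·u, then v′ = v + 1 ≤ 2^n − 1. -/

import Mathlib

/-- Partial transformations on `Q` (partial functions `Q → Q`), with
left-to-right composition: `q·(fg) = (q·f)·g`. -/
def PTrans (Q : Type*) : Type _ := Q → Option Q

/-- The image `R·f` of a configuration `R` under a partial transformation `f`. -/
def pApply {Q : Type*} (R : Set Q) (f : PTrans Q) : Set Q :=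
  {q' | ∃ q ∈ R, f q = some q'}

/-- The image `R·u` of a configuration under a word of partial transformations. -/
def wordApply {Q : Type*} (R : Set Q) (u : List (PTrans Q)) : Set Q :=
  u.foldl pApply R

/-! ### The `n`-bit binary counter
Cells: `(0, i) = dᵢ` (tape `S`), `(1, i) = cᵢ` (tape `T`), `(2, i) = c̄ᵢ`
(tape `T̄`). -/

variable (n : ℕ) [NeZero n]

/-- The cell `dᵢ` of the tape `S`. -/
def dCell (i : Fin n) : Fin 3 × Fin n := (0, i)

/-- The cell `cᵢ` of the tape `T`. -/
def cCell (i : Fin n) : Fin 3 × Fin n := (1, i)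

/-- The cell `c̄ᵢ` of the tape `T̄`. -/
def cbarCell (i : Fin n) : Fin 3 × Fin n := (2, i)

/-- `ι_rotl` : cyclic left rotation on all three tapes. -/
def rotl : PTrans (Fin 3 × Fin n) := fun x => some (x.1, x.2 + 1)

/-- `ι_rotr` : cyclic right rotation on all three tapes. -/
def rotr : PTrans (Fin 3 × Fin n) := fun x => some (x.1, x.2 - 1)

/-- `ι_{=0}` : undefined on `c₀`, identity on all other cells. -/
def eqz : PTrans (Fin 3 × Fin n) := fun x => if x = cCell n 0 then none else some x

/-- `ι_{=1}` : undefined on `c̄₀`, identity on all other cells. -/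
def eqo : PTrans (Fin 3 × Fin n) := fun x => if x = cbarCell n 0 then none else some x

/-- `ι_sync` : undefined on `d₁, …, d_{n-1}`, identity on all other cells. -/
def syncI : PTrans (Fin 3 × Fin n) :=
  fun x => if x.1 = 0 ∧ x.2 ≠ 0 then none else some x

/-- `ι_off` : undefined on `d₀`, identity on all other cells. -/
def offI : PTrans (Fin 3 × Fin n) := fun x => if x = dCell n 0 then none else some x

/-- `ι_inc` : maps `c̄₀` to `c₀`, undefined on `c₀`, identity elsewhere. -/
def incI : PTrans (Fin 3 × Fin n) :=
  fun x => if x = cbarCell n 0 then some (cCell n 0)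
    else if x = cCell n 0 then none else some x

/-- `ι_dec` : maps `c₀` to `c̄₀`, undefined on `c̄₀`, identity elsewhere. -/
def decI : PTrans (Fin 3 × Fin n) :=
  fun x => if x = cCell n 0 then some (cbarCell n 0)
    else if x = cbarCell n 0 then none else some x

/-- The instruction set of the `n`-bit binary counter. -/
def counterI : Set (PTrans (Fin 3 × Fin n)) :=
  {rotl n, rotr n, eqz n, eqo n, syncI n, offI n, incI n, decI n}

/-- A configuration is valid if it contains exactly one cell of the tape `S` and,
for each `i`, exactly one of `cᵢ`, `c̄ᵢ`. -/
def ValidConf (R : Set (Fin 3 × Fin n)) : Prop :=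
  (∃! i : Fin n, dCell n i ∈ R) ∧ ∀ i : Fin n, (cCell n i ∈ R ↔ cbarCell n i ∉ R)

open Classical in
/-- The value of the counter under a configuration `R`: `Σ_{i : cᵢ ∈ R} 2^i`. -/
noncomputable def counterValue (R : Set (Fin 3 × Fin n)) : ℕ :=
  ∑ i : Fin n, if cCell n i ∈ R then 2 ^ (i : ℕ) else 0

/-- Membership in the regular language
`L_reset = ι_sync ((ι_{=0} | ι_dec) ι_rotr ι_off)* (ι_{=0} | ι_dec) ι_rotr ι_sync`. -/
def memLreset (u : List (PTrans (Fin 3 × Fin n))) : Prop :=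
  ∃ (bs : List (PTrans (Fin 3 × Fin n))) (b : PTrans (Fin 3 × Fin n)),
    (∀ x ∈ bs, x = eqz n ∨ x = decI n) ∧ (b = eqz n ∨ b = decI n) ∧
    u = syncI n ::
      ((bs.map fun x => [x, rotr n, offI n]).flatten ++ [b, rotr n, syncI n])

/-- Membership in the regular language
`L_inc = ι_sync (ι_dec ι_rotr ι_off)* ι_inc (ι_off ι_rotr)* ι_sync`. -/
def memLinc (u : List (PTrans (Fin 3 × Fin n))) : Prop :=
  ∃ k m : ℕ,
    u = syncI n ::
      ((List.replicate k [decI n, rotr n, offI n]).flatten ++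
        incI n :: ((List.replicate m [offI n, rotr n]).flatten ++ [syncI n]))

/-- Membership in the regular language
`L_dec = ι_sync (ι_inc ι_rotr ι_off)* ι_dec (ι_off ι_rotr)* ι_sync`. -/
def memLdec (u : List (PTrans (Fin 3 × Fin n))) : Prop :=
  ∃ k m : ℕ,
    u = syncI n ::
      ((List.replicate k [incI n, rotr n, offI n]).flatten ++
        decI n :: ((List.replicate m [offI n, rotr n]).flatten ++ [syncI n]))

/-! Cardinality never grows along a word, so `|R·u| = |R|` forces every instruction of `u` to be
defined on the whole configuration it is applied to. This pins the run down: the first `ι_sync`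
puts the `S`-cell at `d₀`; each round `ι_dec ι_rotr ι_off` clears a bit equal to `1`, and its
`ι_off` forbids a full turn, so the `k` rounds clear the bits `0, …, k-1` with `k < n`; `ι_inc`
then sets bit `k`, which was `0`. The rotations only move the tapes, and the final `ι_sync` forces
the total number `k + m` of them to be a multiple of `n`. The bits have thus changed exactly as in
adding `1` in binary, and every value is at most `2^n - 1`. -/

section PartialTransformations

variable {Q : Type*}

@[simp] theorem wordApply_nil (R : Set Q) : wordApply R [] = R := rfl

theorem wordApply_cons (R : Set Q) (f : PTrans Q) (u : List (PTrans Q)) :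
    wordApply R (f :: u) = wordApply (pApply R f) u := rfl

theorem wordApply_append (R : Set Q) (u v : List (PTrans Q)) :
    wordApply R (u ++ v) = wordApply (wordApply R u) v :=
  List.foldl_append

theorem pApply_eq_self {R : Set Q} {f : PTrans Q} (hf : ∀ q q', f q = some q' → q' = q)
    (hR : ∀ q ∈ R, f q ≠ none) : pApply R f = R := by
  ext q
  refine ⟨fun ⟨q₀, hq₀, h⟩ => hf q₀ q h ▸ hq₀, fun hq => ⟨q, hq, ?_⟩⟩
  obtain ⟨q', h⟩ := Option.ne_none_iff_exists'.mp (hR q hq)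
  rwa [hf q q' h] at h

theorem pApply_eq_insert_sdiff [DecidableEq Q] {R : Set Q} {f : PTrans Q} {a b : Q}
    (hf : ∀ q, f q = if q = a then some b else if q = b then none else some q)
    (ha : a ∈ R) (hb : b ∉ R) : pApply R f = insert b (R \ {a}) := by
  ext x
  simp only [pApply, hf, Set.mem_ofPred_eq, Set.mem_insert_iff, Set.mem_sdiff,
    Set.mem_singleton_iff]
  constructor
  · rintro ⟨q, hq, h⟩
    split_ifs at h with hqa <;> cases h
    · exact .inl rfl
    · exact .inr ⟨hq, hqa⟩
  · rintro (rfl | ⟨hx, hxa⟩)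
    · exact ⟨a, ha, if_pos rfl⟩
    · exact ⟨x, hx, by rw [if_neg hxa, if_neg (ne_of_mem_of_not_mem hx hb)]⟩

variable [Finite Q]

theorem ncard_pApply_le (R : Set Q) (f : PTrans Q) : (pApply R f).ncard ≤ R.ncard := by
  have hsub : some '' pApply R f ⊆ f '' R := by
    rintro _ ⟨q', ⟨q, hq, h⟩, rfl⟩
    exact ⟨q, hq, h⟩
  calc (pApply R f).ncard = (some '' pApply R f).ncard :=
        (Set.ncard_image_of_injective _ (Option.some_injective Q)).symm
    _ ≤ (f '' R).ncard := Set.ncard_le_ncard hsub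
    _ ≤ R.ncard := Set.ncard_image_le (Set.toFinite R)

theorem ncard_wordApply_le (R : Set Q) (u : List (PTrans Q)) :
    (wordApply R u).ncard ≤ R.ncard := by
  induction u generalizing R with
  | nil => rfl
  | cons f u ih => exact (ih _).trans (ncard_pApply_le R f)

theorem ne_none_of_ncard_pApply_eq {R : Set Q} {f : PTrans Q}
    (h : (pApply R f).ncard = R.ncard) : ∀ q ∈ R, f q ≠ none := by
  intro q hq hnone
  have hsub : pApply R f ⊆ pApply (R \ {q}) f := by
    rintro q' ⟨q₀, hq₀, h₀⟩
    refine ⟨q₀, ⟨hq₀, ?_⟩, h₀⟩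
    rintro rfl
    simp [hnone] at h₀
  have := Set.ncard_sdiff_singleton_lt_of_mem hq (Set.toFinite R)
  have := (Set.ncard_le_ncard hsub).trans (ncard_pApply_le (R \ {q}) f)
  omega

theorem ncard_wordApply_append_eq {R : Set Q} {u v : List (PTrans Q)}
    (h : (wordApply R (u ++ v)).ncard = R.ncard) :
    (wordApply R u).ncard = R.ncard ∧
      (wordApply (wordApply R u) v).ncard = (wordApply R u).ncard := by
  rw [wordApply_append] at h
  have := ncard_wordApply_le R u
  have := ncard_wordApply_le (wordApply R u) v
  omega

theorem ne_none_of_ncard_wordApply_cons_eq {R : Set Q} {f : PTrans Q} {u : List (PTrans Q)}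
    (h : (wordApply R (f :: u)).ncard = R.ncard) :
    (∀ q ∈ R, f q ≠ none) ∧ (wordApply (pApply R f) u).ncard = (pApply R f).ncard :=
  have h := ncard_wordApply_append_eq (u := [f]) h
  ⟨ne_none_of_ncard_pApply_eq h.1, h.2⟩

end PartialTransformations

open Fin.NatCast

/-- The valid configuration with bit set `B`, indexed by absolute position, after `s` applications
of `ι_rotr` to the one whose `S`-cell is `d₀`: the cell `(t, i)` carries absolute position
`i + s`. -/
def rotatedConf (B : Finset (Fin n)) (s : Fin n) : Set (Fin 3 × Fin n) :=
  {x | (x.1 = 0 ∧ x.2 + s = 0) ∨ (x.1 = 1 ∧ x.2 + s ∈ B) ∨ (x.1 = 2 ∧ x.2 + s ∉ B)}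

variable {n}

@[simp] theorem dCell_mem_rotatedConf {B : Finset (Fin n)} {s i : Fin n} :
    dCell n i ∈ rotatedConf n B s ↔ i + s = 0 := by
  simp [rotatedConf, dCell]

@[simp] theorem cCell_mem_rotatedConf {B : Finset (Fin n)} {s i : Fin n} :
    cCell n i ∈ rotatedConf n B s ↔ i + s ∈ B := by
  simp [rotatedConf, cCell]

@[simp] theorem cbarCell_mem_rotatedConf {B : Finset (Fin n)} {s i : Fin n} :
    cbarCell n i ∈ rotatedConf n B s ↔ i + s ∉ B := by
  simp [rotatedConf, cbarCell]

theorem ValidConf.exists_eq_rotatedConf {R : Set (Fin 3 × Fin n)} (hR : ValidConf n R) :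
    ∃ B s, R = rotatedConf n B s := by
  classical
  obtain ⟨⟨p, hp, hp_unique⟩, hc⟩ := hR
  refine ⟨({j | cCell n (j + p) ∈ R} : Finset (Fin n)), -p, ?_⟩
  ext ⟨t, i⟩
  fin_cases t
  · change dCell n i ∈ R ↔ dCell n i ∈ _
    simpa [← sub_eq_add_neg, sub_eq_zero] using ⟨hp_unique i, fun h => h ▸ hp⟩
  · change cCell n i ∈ R ↔ cCell n i ∈ _
    simp
  · change cbarCell n i ∈ R ↔ cbarCell n i ∈ _
    simpa using iff_not_comm.mp (hc i)

theorem mem_pApply_rotr {R : Set (Fin 3 × Fin n)} {x : Fin 3 × Fin n} :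
    x ∈ pApply R (rotr n) ↔ (x.1, x.2 + 1) ∈ R := by
  refine ⟨?_, fun h => ⟨_, h, by simp [rotr]⟩⟩
  rintro ⟨q, hq, h⟩
  cases h
  simpa using hq

theorem pApply_rotr_rotatedConf (B : Finset (Fin n)) (s : Fin n) :
    pApply (rotatedConf n B s) (rotr n) = rotatedConf n B (s + 1) := by
  ext x
  simp [mem_pApply_rotr, rotatedConf, add_assoc, add_comm 1 s]

theorem pApply_decI_rotatedConf {B : Finset (Fin n)} {s : Fin n} (hs : s ∈ B) :
    pApply (rotatedConf n B s) (decI n) = rotatedConf n (B.erase s) s := by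
  rw [pApply_eq_insert_sdiff (f := decI n) (fun _ => rfl) (by simpa) (by simpa)]
  ext ⟨t, i⟩
  fin_cases t <;> simp [rotatedConf, cCell, cbarCell] <;> tauto

theorem pApply_incI_rotatedConf {B : Finset (Fin n)} {s : Fin n} (hs : s ∉ B) :
    pApply (rotatedConf n B s) (incI n) = rotatedConf n (insert s B) s := by
  rw [pApply_eq_insert_sdiff (f := incI n) (fun _ => rfl) (by simpa) (by simpa)]
  ext ⟨t, i⟩
  fin_cases t <;> simp [rotatedConf, cCell, cbarCell, or_comm]

theorem eq_of_syncI_eq_some {q q' : Fin 3 × Fin n} (h : syncI n q = some q') : q' = q := by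
  simp only [syncI] at h
  split_ifs at h
  exact (Option.some.inj h).symm

theorem eq_of_offI_eq_some {q q' : Fin 3 × Fin n} (h : offI n q = some q') : q' = q := by
  simp only [offI] at h
  split_ifs at h
  exact (Option.some.inj h).symm

theorem eq_zero_of_syncI_ne_none {B : Finset (Fin n)} {s : Fin n}
    (h : ∀ q ∈ rotatedConf n B s, syncI n q ≠ none) : s = 0 := by
  by_contra hs
  exact h (dCell n (-s)) (by simp) (by simp [syncI, dCell, hs])

theorem ne_zero_of_offI_ne_none {B : Finset (Fin n)} {s : Fin n}
    (h : ∀ q ∈ rotatedConf n B s, offI n q ≠ none) : s ≠ 0 := by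
  rintro rfl
  exact h (dCell n 0) (by simp) (by simp [offI])

theorem mem_of_decI_ne_none {B : Finset (Fin n)} {s : Fin n}
    (h : ∀ q ∈ rotatedConf n B s, decI n q ≠ none) : s ∈ B := by
  by_contra hs
  exact h (cbarCell n 0) (by simpa) (by simp [decI, cCell, cbarCell])

theorem not_mem_of_incI_ne_none {B : Finset (Fin n)} {s : Fin n}
    (h : ∀ q ∈ rotatedConf n B s, incI n q ≠ none) : s ∉ B := by
  intro hs
  exact h (cCell n 0) (by simpa) (by simp [incI, cCell, cbarCell])

theorem wordApply_dec_rotr_off_rotatedConf {B : Finset (Fin n)} {s : Fin n}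
    (h : (wordApply (rotatedConf n B s) [decI n, rotr n, offI n]).ncard =
      (rotatedConf n B s).ncard) :
    s ∈ B ∧ s + 1 ≠ 0 ∧
      wordApply (rotatedConf n B s) [decI n, rotr n, offI n] =
        rotatedConf n (B.erase s) (s + 1) := by
  obtain ⟨hdec, h⟩ := ne_none_of_ncard_wordApply_cons_eq h
  have hs := mem_of_decI_ne_none hdec
  rw [pApply_decI_rotatedConf hs] at h
  obtain ⟨-, h⟩ := ne_none_of_ncard_wordApply_cons_eq h
  rw [pApply_rotr_rotatedConf] at h
  obtain ⟨hoff, -⟩ := ne_none_of_ncard_wordApply_cons_eq h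
  refine ⟨hs, ne_zero_of_offI_ne_none hoff, ?_⟩
  rw [wordApply_cons, pApply_decI_rotatedConf hs, wordApply_cons, pApply_rotr_rotatedConf,
    wordApply_cons, pApply_eq_self (fun _ _ => eq_of_offI_eq_some) hoff]
  rfl

theorem wordApply_replicate_dec_rotr_off_rotatedConf {B : Finset (Fin n)} {k : ℕ}
    (h : (wordApply (rotatedConf n B 0)
      (List.replicate k [decI n, rotr n, offI n]).flatten).ncard = (rotatedConf n B 0).ncard) :
    k < n ∧ (∀ i : Fin n, (i : ℕ) < k → i ∈ B) ∧
      wordApply (rotatedConf n B 0) (List.replicate k [decI n, rotr n, offI n]).flatten =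
        rotatedConf n {i ∈ B | k ≤ (i : ℕ)} k := by
  induction k with
  | zero => exact ⟨Nat.pos_of_neZero n, by simp, by simp⟩
  | succ k ih =>
    rw [List.replicate_succ', List.flatten_append, List.flatten_singleton] at h ⊢
    obtain ⟨h, hround⟩ := ncard_wordApply_append_eq h
    obtain ⟨hk, hlow, e⟩ := ih h
    rw [e] at hround
    obtain ⟨hkB, hk_succ, e'⟩ := wordApply_dec_rotr_off_rotatedConf hround
    have hk_val : ((k : Fin n) : ℕ) = k := Fin.val_cast_of_lt hk
    refine ⟨?_, fun i hi => ?_, ?_⟩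
    · by_contra
      exact hk_succ (by rw [← Nat.cast_add_one, show k + 1 = n by omega, Fin.natCast_self])
    · rcases Nat.lt_succ_iff_lt_or_eq.mp hi with hi | hi
      · exact hlow i hi
      · rw [show i = k from Fin.ext (hi.trans hk_val.symm)]
        exact (Finset.mem_filter.mp hkB).1
    · rw [wordApply_append, e, e', Nat.cast_succ]
      congr 1
      ext i
      simp only [Finset.mem_erase, Finset.mem_filter, ne_eq, Fin.ext_iff, hk_val]
      grind

theorem wordApply_replicate_off_rotr_rotatedConf {C : Finset (Fin n)} {s : Fin n} {m : ℕ}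
    (h : (wordApply (rotatedConf n C s) (List.replicate m [offI n, rotr n]).flatten).ncard =
      (rotatedConf n C s).ncard) :
    wordApply (rotatedConf n C s) (List.replicate m [offI n, rotr n]).flatten =
      rotatedConf n C (s + m) := by
  induction m with
  | zero => simp
  | succ m ih =>
    rw [List.replicate_succ', List.flatten_append, List.flatten_singleton] at h ⊢
    obtain ⟨h, hround⟩ := ncard_wordApply_append_eq h
    rw [ih h] at hround
    obtain ⟨hoff, -⟩ := ne_none_of_ncard_wordApply_cons_eq hround
    rw [wordApply_append, ih h, wordApply_cons, pApply_eq_self (fun _ _ => eq_of_offI_eq_some) hoff,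
      wordApply_cons, pApply_rotr_rotatedConf, Nat.cast_succ, add_assoc]
    rfl

theorem ValidConf.wordApply_eq_of_memLinc {R : Set (Fin 3 × Fin n)} (hR : ValidConf n R)
    {u : List (PTrans (Fin 3 × Fin n))} (hu : memLinc n u)
    (h : (wordApply R u).ncard = R.ncard) :
    ∃ (B : Finset (Fin n)) (K : Fin n), R = rotatedConf n B 0 ∧ (∀ i < K, i ∈ B) ∧ K ∉ B ∧
      wordApply R u = rotatedConf n (insert K {i ∈ B | K ≤ i}) 0 := by
  obtain ⟨k, m, rfl⟩ := hu
  obtain ⟨B, s, rfl⟩ := hR.exists_eq_rotatedConf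
  obtain ⟨hsync, h⟩ := ne_none_of_ncard_wordApply_cons_eq h
  obtain rfl := eq_zero_of_syncI_ne_none hsync
  have hsync_id := pApply_eq_self (fun _ _ => eq_of_syncI_eq_some) hsync
  rw [hsync_id] at h
  obtain ⟨hdecs, h⟩ := ncard_wordApply_append_eq h
  obtain ⟨hk, hlow, hdecs_eq⟩ := wordApply_replicate_dec_rotr_off_rotatedConf hdecs
  rw [hdecs_eq] at h
  obtain ⟨hinc, h⟩ := ne_none_of_ncard_wordApply_cons_eq h
  have hkB := not_mem_of_incI_ne_none hinc
  rw [pApply_incI_rotatedConf hkB] at h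
  obtain ⟨hrots, h⟩ := ncard_wordApply_append_eq h
  rw [wordApply_replicate_off_rotr_rotatedConf hrots] at h
  obtain ⟨hsync', -⟩ := ne_none_of_ncard_wordApply_cons_eq h
  have hk_val : ((k : Fin n) : ℕ) = k := Fin.val_cast_of_lt hk
  have hfilter : ({i ∈ B | k ≤ (i : ℕ)} : Finset (Fin n)) = {i ∈ B | (k : Fin n) ≤ i} := by
    simp only [Fin.le_def, hk_val]
  refine ⟨B, k, rfl, fun i hi => hlow i (hk_val ▸ hi), fun hB => hkB (by simp [hB, hk_val]), ?_⟩
  rw [wordApply_cons, hsync_id, wordApply_append, hdecs_eq, wordApply_cons,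
    pApply_incI_rotatedConf hkB, wordApply_append, wordApply_replicate_off_rotr_rotatedConf hrots,
    wordApply_cons, pApply_eq_self (fun _ _ => eq_of_syncI_eq_some) hsync',
    eq_zero_of_syncI_ne_none hsync', hfilter]
  rfl

theorem counterValue_rotatedConf_zero (B : Finset (Fin n)) :
    counterValue n (rotatedConf n B 0) = ∑ i ∈ B, 2 ^ (i : ℕ) := by
  simp [counterValue, Finset.sum_ite_mem]

theorem Fin.sum_Iio_two_pow {m : ℕ} (K : Fin m) :
    ∑ i ∈ Finset.Iio K, 2 ^ (i : ℕ) = 2 ^ (K : ℕ) - 1 :=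
  calc ∑ i ∈ Finset.Iio K, 2 ^ (i : ℕ) = ∑ j ∈ (Finset.Iio K).map Fin.valEmbedding, 2 ^ j :=
        (Finset.sum_map (Finset.Iio K) Fin.valEmbedding (2 ^ ·)).symm
    _ = 2 ^ (K : ℕ) - 1 := by
      rw [Fin.map_valEmbedding_Iio, Nat.Iio_eq_range, Nat.geomSum_eq le_rfl, Nat.div_one]

theorem Fin.sum_two_pow_le {m : ℕ} (S : Finset (Fin m)) : ∑ i ∈ S, 2 ^ (i : ℕ) ≤ 2 ^ m - 1 :=
  calc ∑ i ∈ S, 2 ^ (i : ℕ) ≤ ∑ i : Fin m, 2 ^ (i : ℕ) := Finset.sum_le_sum_of_subset S.subset_univ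
    _ = 2 ^ m - 1 := by
      rw [Fin.sum_univ_eq_sum_range (2 ^ ·), Nat.geomSum_eq le_rfl, Nat.div_one]

theorem Fin.sum_two_pow_insert_filter {m : ℕ} {B : Finset (Fin m)} {K : Fin m}
    (hlow : ∀ i < K, i ∈ B) (hK : K ∉ B) :
    ∑ i ∈ insert K {i ∈ B | K ≤ i}, 2 ^ (i : ℕ) = ∑ i ∈ B, 2 ^ (i : ℕ) + 1 := by
  have hlow_eq : {i ∈ B | ¬K ≤ i} = Finset.Iio K := by
    ext i
    simpa using hlow i
  rw [Finset.sum_insert (by simp [hK]), ← Finset.sum_filter_add_sum_filter_not B (K ≤ ·),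
    hlow_eq, Fin.sum_Iio_two_pow]
  have := Nat.one_le_two_pow (n := K)
  omega

/-- Applying a cardinality-preserving word of `L_inc` to a
valid configuration of an `n`-bit binary counter increments its value by one,
and this value stays at most `2^n - 1`. -/
theorem counter_increment
    (R : Set (Fin 3 × Fin n)) (hR : ValidConf n R)
    (u : List (PTrans (Fin 3 × Fin n))) (hu : memLinc n u)
    (hcard : (wordApply R u).ncard = R.ncard) :
    counterValue n (wordApply R u) = counterValue n R + 1 ∧
    counterValue n R + 1 ≤ 2 ^ n - 1 := by
  obtain ⟨B, K, rfl, hlow, hK, hRu⟩ := hR.wordApply_eq_of_memLinc hu hcard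
  have hsucc := Fin.sum_two_pow_insert_filter hlow hK
  rw [hRu, counterValue_rotatedConf_zero, counterValue_rotatedConf_zero, hsucc]
  exact ⟨rfl, hsucc ▸ Fin.sum_two_pow_le _⟩
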